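/- arXiv:1706.09233 — 2 statements merged into one kernel-verified Lean document; each statement's English description precedes it below -/
import Mathlib

section
/- Let φ : ℝ × ℝ → ℝ be a continuous function that is symmetric in both its first and its second argument (φ(−x,u) = φ(x,u) and φ(x,−u) = φ(x,u)), such that the kernel ((x₁,u₁),(x₂,u₂)) ↦ φ(x₁ − x₂, u₁ − u₂) is positive definite on ℝ × ℝ, and such that φ(x,u) = 0 whenever |x| ≥ π, for all u ∈ ℝ. Let ψ be the restriction of φ to [0,π] × ℝ in the first argument. Then ψ is a geodesically isotropic, temporally symmetric covariance function on the circle 𝕊¹ cross time; that is, the kernel ((s₁,t₁),(s₂,t₂)) ↦ ψ(d_GC(s₁,s₂), t₁ − t₂) is positive definite on 𝕊¹ × ℝ. -/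
open scoped RealInnerProductSpace

noncomputable def gcDist {n : ℕ} (x y : EuclideanSpace ℝ (Fin n)) : ℝ :=
  Real.arccos ⟪x, y⟫

def IsPosDefKernel {X : Type*} (K : X → X → ℝ) : Prop :=
  ∀ (N : ℕ) (x : Fin N → X) (c : Fin N → ℝ),
    0 ≤ ∑ i : Fin N, ∑ j : Fin N, c i * c j * K (x i) (x j)

/-!
Write the points of `𝕊¹` as `(cos θᵢ, sin θᵢ)` with `|θᵢ| ≤ π`. Since `φ` is even in its first
argument and vanishes for `|x| ≥ π`, at angular difference `d` the great circle distance sees the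
periodisation `φ (d - 2π) + φ d + φ (d + 2π)`. Hence the quadratic form on the circle is
`A₋₁ + A₀ + A₁`, where `A k = ∑ cᵢ cⱼ φ (θᵢ - θⱼ + 2πk) (tᵢ - tⱼ)`, and `A k = 0` for `|k| ≥ 2`.
Positive definiteness on `ℝ × ℝ`, applied to the `M + 1` translates `θᵢ + 2πm`, `0 ≤ m ≤ M`, gives
`(M + 1) A₀ + M (A₁ + A₋₁) ≥ 0`; dividing by `M` and letting `M → ∞` gives the claim.
-/

open Real

theorem IsPosDefKernel.sum_sum_nonneg {X ι : Type*} [Fintype ι] {K : X → X → ℝ}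
    (hK : IsPosDefKernel K) (x : ι → X) (c : ι → ℝ) :
    0 ≤ ∑ i, ∑ j, c i * c j * K (x i) (x j) := by
  let e := Fintype.equivFin ι
  exact (hK _ (x ∘ e.symm) (c ∘ e.symm)).trans_eq
    (Fintype.sum_equiv e.symm _ _ fun i => Fintype.sum_equiv e.symm _ _ fun j => rfl)

theorem exists_angle_of_mem_sphere {s : EuclideanSpace ℝ (Fin 2)}
    (hs : s ∈ Metric.sphere 0 1) : ∃ θ, |θ| ≤ π ∧ s 0 = cos θ ∧ s 1 = sin θ := by
  set z : ℂ := ⟨s 0, s 1⟩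
  have hz : ‖z‖ = 1 := by
    rw [mem_sphere_zero_iff_norm, EuclideanSpace.norm_eq, Fin.sum_univ_two] at hs
    simpa [z, Complex.norm_def, Complex.normSq_apply, ← sq] using hs
  have hz0 : z ≠ 0 := norm_ne_zero_iff.mp (hz ▸ one_ne_zero)
  refine ⟨z.arg, abs_le.2 ⟨(Complex.neg_pi_lt_arg z).le, Complex.arg_le_pi z⟩, ?_, ?_⟩
  · rw [Complex.cos_arg hz0, hz, div_one]
  · rw [Complex.sin_arg, hz, div_one]

theorem gcDist_eq_arccos_cos_sub {s s' : EuclideanSpace ℝ (Fin 2)} {θ θ' : ℝ}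
    (hs₀ : s 0 = cos θ) (hs₁ : s 1 = sin θ) (hs'₀ : s' 0 = cos θ') (hs'₁ : s' 1 = sin θ') :
    gcDist s s' = arccos (cos (θ - θ')) := by
  rw [gcDist, cos_sub, PiLp.inner_apply, Fin.sum_univ_two]
  simp only [RCLike.inner_apply, conj_trivial, hs₀, hs₁, hs'₀, hs'₁]
  ring_nf

theorem apply_arccos_cos_eq_add_shifts {M : Type*} [AddCommMonoid M] {f : ℝ → M}
    (heven : ∀ x, f (-x) = f x) (hsupp : ∀ x, π ≤ |x| → f x = 0) {d : ℝ} (hd : |d| ≤ 2 * π) :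
    f (arccos (cos d)) = f (d - 2 * π) + f d + f (d + 2 * π) := by
  wlog hd₀ : 0 ≤ d generalizing d
  · have := this (d := -d) (by rwa [abs_neg]) (by linarith)
    rw [cos_neg] at this
    rw [this, show -d - 2 * π = -(d + 2 * π) by ring,
      show -d + 2 * π = -(d - 2 * π) by ring]
    simp only [heven]
    abel
  have hπ := pi_pos
  rw [abs_of_nonneg hd₀] at hd
  rcases le_or_gt d π with hdπ | hdπ
  · rw [arccos_cos hd₀ hdπ, hsupp (d - 2 * π) (by rw [abs_of_neg] <;> linarith),
      hsupp (d + 2 * π) (by rw [abs_of_pos] <;> linarith), zero_add, add_zero]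
  · rw [← cos_sub_two_pi, ← cos_neg, arccos_cos (by linarith) (by linarith), heven,
      hsupp d (by rw [abs_of_pos] <;> linarith),
      hsupp (d + 2 * π) (by rw [abs_of_pos] <;> linarith), add_zero, add_zero]

theorem pi_le_abs_add_two_pi_mul_int {d : ℝ} (hd : |d| ≤ 2 * π) {k : ℤ} (hk : 2 ≤ |k|) :
    π ≤ |d + 2 * π * k| := by
  have hk' : (2 : ℝ) ≤ |(k : ℝ)| := by exact_mod_cast hk
  have h := abs_sub_abs_le_abs_sub (2 * π * k) (-d)
  rw [abs_neg, sub_neg_eq_add, add_comm, abs_mul, abs_of_pos (by positivity : 0 < 2 * π)] at h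
  nlinarith [pi_pos]

theorem Fin.sum_apply_sub_last {M : Type*} [AddCommMonoid M] {g : ℤ → M}
    (hg : ∀ k, 2 ≤ |k| → g k = 0) (n : ℕ) :
    ∑ m : Fin (n + 1), g (m - (n + 1)) = g (-1) := by
  rw [Fintype.sum_eq_single (Fin.last n)]
  · simp
  · intro m hm
    have := Fin.val_lt_last hm
    exact hg _ (by rw [abs_of_neg (by omega)]; omega)

theorem Fin.sum_sum_apply_sub {M : Type*} [AddCommMonoid M] {g : ℤ → M}
    (hg : ∀ k, 2 ≤ |k| → g k = 0) (n : ℕ) :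
    ∑ m : Fin (n + 1), ∑ m' : Fin (n + 1), g (m - m') = (n + 1) • g 0 + n • (g 1 + g (-1)) := by
  induction n with
  | zero => simp
  | succ n ih =>
    have hcol : ∑ m : Fin (n + 1), g (n + 1 - m) = g 1 := by
      simpa only [neg_sub, neg_neg] using
        Fin.sum_apply_sub_last (g := fun k => g (-k)) (fun k hk => hg _ (by rwa [abs_neg])) n
    simp only [Fin.sum_univ_castSucc (n := n + 1), Fin.val_castSucc, Fin.val_last,
      Finset.sum_add_distrib, ih]
    push_cast
    rw [Fin.sum_apply_sub_last hg, hcol, sub_self]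
    simp only [succ_nsmul]
    abel

theorem sum_sum_shift_nonneg {φ : ℝ → ℝ → ℝ}
    (hpd : IsPosDefKernel (fun p q : ℝ × ℝ => φ (p.1 - q.1) (p.2 - q.2)))
    {N : ℕ} (θ t c : Fin N → ℝ) (T : ℝ) (M : ℕ) :
    0 ≤ ∑ m : Fin M, ∑ m' : Fin M,
      ∑ i, ∑ j, c i * c j * φ (θ i - θ j + T * ((m - m' : ℤ) : ℝ)) (t i - t j) := by
  have h := hpd.sum_sum_nonneg (ι := Fin M × Fin N) (fun x => (θ x.2 + T * x.1, t x.2))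
    (fun x => c x.2)
  simp only [Fintype.sum_prod_type] at h
  refine h.trans_eq (Finset.sum_congr rfl fun m _ => ?_)
  rw [Finset.sum_comm]
  refine Finset.sum_congr rfl fun i _ => Finset.sum_congr rfl fun m' _ => ?_
  congr! 3
  push_cast
  ring

theorem nonneg_of_forall_nat_mul_add_nonneg {x y : ℝ} (h : ∀ n : ℕ, 0 ≤ n * x + y) : 0 ≤ x := by
  by_contra! hx
  obtain ⟨n, hn⟩ := exists_nat_gt (y / -x)
  rw [div_lt_iff₀ (neg_pos.2 hx)] at hn
  linarith [h n]

theorem restriction_posdef_circle_time_general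
    (φ : ℝ → ℝ → ℝ)
    (hsymm1 : ∀ x u : ℝ, φ (-x) u = φ x u)
    (hpd : IsPosDefKernel (fun p q : ℝ × ℝ => φ (p.1 - q.1) (p.2 - q.2)))
    (hsupp : ∀ x u : ℝ, Real.pi ≤ |x| → φ x u = 0) :
    IsPosDefKernel (fun p q : Metric.sphere (0 : EuclideanSpace ℝ (Fin 2)) 1 × ℝ =>
      φ (gcDist (p.1 : EuclideanSpace ℝ (Fin 2)) (q.1 : EuclideanSpace ℝ (Fin 2)))
        (p.2 - q.2)) := by
  intro N p c
  choose θ hθ hcos hsin using fun i => exists_angle_of_mem_sphere (p i).1.2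
  set t : Fin N → ℝ := fun i => (p i).2
  set A : ℤ → ℝ := fun k => ∑ i, ∑ j, c i * c j * φ (θ i - θ j + 2 * π * k) (t i - t j)
  have hθθ : ∀ i j, |θ i - θ j| ≤ 2 * π := fun i j =>
    (abs_sub _ _).trans (by linarith [hθ i, hθ j])
  have hA : ∀ k : ℤ, 2 ≤ |k| → A k = 0 := fun k hk =>
    Finset.sum_eq_zero fun i _ => Finset.sum_eq_zero fun j _ => by
      rw [hsupp _ _ (pi_le_abs_add_two_pi_mul_int (hθθ i j) hk), mul_zero]
  have hfold : ∑ i, ∑ j, c i * c j * φ (gcDist (p i).1.1 (p j).1.1) (t i - t j) =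
      A (-1) + A 0 + A 1 := by
    simp only [A, ← Finset.sum_add_distrib, ← mul_add]
    refine Finset.sum_congr rfl fun i _ => Finset.sum_congr rfl fun j _ => ?_
    rw [gcDist_eq_arccos_cos_sub (hcos i) (hsin i) (hcos j) (hsin j),
      apply_arccos_cos_eq_add_shifts (f := (φ · (t i - t j))) (fun x => hsymm1 x _)
        (fun x hx => hsupp x _ hx) (hθθ i j)]
    simp only [Int.cast_neg, Int.cast_zero, Int.cast_one, mul_neg, mul_zero, mul_one, add_zero,
      ← sub_eq_add_neg]
  have hreplicas : ∀ M : ℕ, 0 ≤ M * (A (-1) + A 0 + A 1) + A 0 := fun M =>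
    ((sum_sum_shift_nonneg hpd θ t c (2 * π) (M + 1)).trans_eq
      (Fin.sum_sum_apply_sub hA M)).trans_eq (by simp only [nsmul_eq_mul]; push_cast; ring)
  exact hfold ▸ nonneg_of_forall_nat_mul_add_nonneg hreplicas

/-- A continuous, componentwise symmetric, positive definite function on `ℝ × ℝ`
vanishing for `|x| ≥ π` restricts to a geodesically isotropic, temporally symmetric
covariance function on the circle `𝕊¹` cross time. -/
theorem restriction_posdef_circle_time
    (φ : ℝ → ℝ → ℝ) (hcont : Continuous (Function.uncurry φ))
    (hsymm1 : ∀ x u : ℝ, φ (-x) u = φ x u)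
    (hsymm2 : ∀ x u : ℝ, φ x (-u) = φ x u)
    (hpd : IsPosDefKernel (fun p q : ℝ × ℝ => φ (p.1 - q.1) (p.2 - q.2)))
    (hsupp : ∀ x u : ℝ, Real.pi ≤ |x| → φ x u = 0) :
    IsPosDefKernel (fun p q : Metric.sphere (0 : EuclideanSpace ℝ (Fin 2)) 1 × ℝ =>
      φ (gcDist (p.1 : EuclideanSpace ℝ (Fin 2)) (q.1 : EuclideanSpace ℝ (Fin 2)))
        (p.2 - q.2)) :=
  restriction_posdef_circle_time_general φ hsymm1 hpd hsupp
end

section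
/- Let φ : ℝ × ℝ → ℝ be a continuous function, symmetric in the first argument (φ(−x,u) = φ(x,u)), such that the kernel ((x₁,u₁),(x₂,u₂)) ↦ φ(x₁ − x₂, u₁ − u₂) is positive definite on ℝ × ℝ, and such that φ(x,u) = 0 whenever |x| ≥ π, for all u ∈ ℝ. Then for every natural number n, the function b_n(u) = (1/π)·∫_{−∞}^{∞} cos(n·x)·φ(x,u) dx is a continuous positive definite function on ℝ, i.e., the kernel (u₁,u₂) ↦ b_n(u₁ − u₂) is positive definite on ℝ. -/
open scoped RealInnerProductSpace

open MeasureTheory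

/-!
Expanding `cos (n (x - y)) = cos (n x) cos (n y) + sin (n x) sin (n y)` shows that, for fixed
points `uᵢ` and weights `cᵢ`, the function `k t = ∑ᵢⱼ cᵢ cⱼ cos (n t) φ (t, uᵢ - uⱼ)` is positive
definite on `ℝ`, while `∑ᵢⱼ cᵢ cⱼ b_n (uᵢ - uⱼ) = π⁻¹ ∫ k`. A continuous, compactly supported,
positive definite `k` has `∫ k ≥ 0`: the quadratic form of `k (· / m)` at the all-ones vector on
`{0, …, M - 1}` grows like `M ∑_d k (d / m)` (`d ∈ ℤ`), which forces `∑_d k (d / m) ≥ 0`, and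
`m⁻¹ ∑_d k (d / m)` is a Riemann sum of `∫ k`.
-/

open Finset Filter Topology

namespace IsPosDefKernel

variable {X Y : Type*} {K : X → X → ℝ}

theorem sum_nonneg (hK : IsPosDefKernel K) {ι : Type*} [Fintype ι] (x : ι → X) (c : ι → ℝ) :
    0 ≤ ∑ i, ∑ j, c i * c j * K (x i) (x j) := by
  have e := Fintype.equivFin ι
  convert hK _ (x ∘ e.symm) (c ∘ e.symm) using 1
  exact Fintype.sum_equiv e _ _ fun i => Fintype.sum_equiv e _ _ fun j => by simp

theorem comp (hK : IsPosDefKernel K) (g : Y → X) : IsPosDefKernel fun a b => K (g a) (g b) :=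
  fun N x c => hK N (g ∘ x) c

theorem add {K' : X → X → ℝ} (hK : IsPosDefKernel K) (hK' : IsPosDefKernel K') :
    IsPosDefKernel (K + K') := fun N x c => by
  simpa only [Pi.add_apply, mul_add, sum_add_distrib] using
    add_nonneg (hK N x c) (hK' N x c)

theorem weight (hK : IsPosDefKernel K) (w : X → ℝ) :
    IsPosDefKernel fun x y => w x * w y * K x y := fun N x c => by
  simpa only [mul_assoc, mul_left_comm] using hK N x fun i => c i * w (x i)

theorem cos_sub_mul (hK : IsPosDefKernel K) (ω : X → ℝ) :
    IsPosDefKernel fun x y => Real.cos (ω x - ω y) * K x y := by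
  convert (hK.weight (Real.cos ∘ ω)).add (hK.weight (Real.sin ∘ ω)) using 1
  funext x y
  simp only [Pi.add_apply, Function.comp_apply, Real.cos_sub]
  ring

theorem sum_slice {K : X × Y → X × Y → ℝ} (hK : IsPosDefKernel K) {ι : Type*} [Fintype ι]
    (u : ι → Y) (c : ι → ℝ) :
    IsPosDefKernel fun x y => ∑ i, ∑ j, c i * c j * K (x, u i) (y, u j) := fun N x e => by
  convert hK.sum_nonneg (fun p : Fin N × ι => (x p.1, u p.2)) (fun p => e p.1 * c p.2) using 1
  simp only [Fintype.sum_prod_type, mul_sum]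
  refine sum_congr rfl fun a _ => ?_
  rw [sum_comm]
  exact sum_congr rfl fun b _ => sum_congr rfl fun i _ => sum_congr rfl fun j _ => by ring

end IsPosDefKernel

theorem sum_Icc_neg_eq_sum_range (f : ℤ → ℝ) (M : ℕ) :
    ∑ d ∈ Icc (-M : ℤ) M, f d =
      ∑ a ∈ range M, f (a - M) + f 0 + ∑ b ∈ range M, f (M - b) := by
  have hIcc : ∑ d ∈ Icc (-M : ℤ) M, f d = ∑ i ∈ range (M + 1 + M), f (i - M) :=
    sum_nbij' (fun d => (d + M).toNat) (fun i => i - M)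
      (fun d hd => by rw [mem_Icc] at hd; rw [mem_range]; omega)
      (fun i hi => by rw [mem_range] at hi; rw [mem_Icc]; omega)
      (fun d hd => by rw [mem_Icc] at hd; omega) (fun i _ => by omega)
      (fun d hd => by rw [mem_Icc] at hd; congr 1; omega)
  rw [hIcc, sum_range_add, sum_range_succ, ← sum_range_reflect (fun b : ℕ => f (M - b))]
  simp only [sub_self]
  congr 1
  refine sum_congr rfl fun j hj => ?_
  rw [mem_range] at hj
  congr 1
  omega

theorem sum_range_sum_range_sub_succ (f : ℤ → ℝ) (M : ℕ) :
    ∑ a ∈ range (M + 1), ∑ b ∈ range (M + 1), f (a - b) =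
      ∑ a ∈ range M, ∑ b ∈ range M, f (a - b) + ∑ d ∈ Icc (-M : ℤ) M, f d := by
  simp only [sum_range_succ, sum_add_distrib, sum_Icc_neg_eq_sum_range, sub_self]
  ring

theorem IsPosDefKernel.sum_Icc_nonneg {f : ℤ → ℝ} (hf : IsPosDefKernel fun a b : ℤ => f (a - b))
    {D : ℕ} (hD : ∀ d ∉ Icc (-D : ℤ) D, f d = 0) : 0 ≤ ∑ d ∈ Icc (-D : ℤ) D, f d := by
  set S := ∑ d ∈ Icc (-D : ℤ) D, f d
  set Q : ℕ → ℝ := fun M => ∑ a ∈ range M, ∑ b ∈ range M, f (a - b)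
  have hQ : ∀ M, 0 ≤ Q M := fun M => by
    simpa only [Q, sum_range, Pi.one_apply, one_mul] using hf M (fun a => (a : ℕ)) 1
  have hS : ∀ M, D ≤ M → ∑ d ∈ Icc (-M : ℤ) M, f d = S := fun M hM =>
    (sum_subset (Icc_subset_Icc (by omega) (by omega)) fun d _ hd => hD d hd).symm
  have hQD : ∀ j : ℕ, Q (D + j) = Q D + j * S := by
    intro j
    induction j with
    | zero => simp
    | succ j ih =>
      rw [← add_assoc,
        show Q (D + j + 1) = Q (D + j) + _ from sum_range_sum_range_sub_succ f (D + j),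
        hS _ (by omega), ih]
      push_cast
      ring
  by_contra! hneg
  obtain ⟨j, hj⟩ := exists_nat_gt (Q D / -S)
  have := hQ (D + j)
  rw [hQD, div_lt_iff₀ (neg_pos.2 hneg)] at *
  nlinarith

theorem integral_comp_intFloor {f : ℤ → ℝ} {s : Finset ℤ} (hf : ∀ d ∉ s, f d = 0) :
    ∫ t : ℝ, f ⌊t⌋ = ∑ d ∈ s, f d := by
  have hstep : (fun t : ℝ => f ⌊t⌋) =
      fun t => ∑ d ∈ s, (Set.Ico (d : ℝ) (d + 1)).indicator (fun _ => f d) t := by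
    funext t
    simp only [Set.indicator_apply, Set.mem_Ico, ← Int.floor_eq_iff, sum_ite_eq]
    split_ifs with h
    · rfl
    · exact hf _ h
  rw [hstep, integral_finsetSum _ fun d _ =>
    (integrable_indicator_iff measurableSet_Ico).2 (integrableOn_const measure_Ico_lt_top.ne)]
  simp [integral_indicator_const _ measurableSet_Ico]

theorem dist_intFloor_mul_div_le {m : ℝ} (hm : 0 < m) (t : ℝ) : dist (⌊m * t⌋ / m) t ≤ m⁻¹ := by
  have h₁ := Int.floor_le (m * t)
  have h₂ := Int.lt_floor_add_one (m * t)
  rw [Real.dist_eq, show (⌊m * t⌋ : ℝ) / m - t = (⌊m * t⌋ - m * t) / m by field_simp, abs_div,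
    abs_of_pos hm, div_le_iff₀ hm, inv_mul_cancel₀ hm.ne', abs_le]
  constructor <;> linarith

theorem tendsto_integral_comp_intFloor_mul_div {k : ℝ → ℝ} (hk : Continuous k)
    (hsupp : HasCompactSupport k) :
    Tendsto (fun m : ℕ => ∫ t : ℝ, k (⌊m * t⌋ / m)) atTop (𝓝 (∫ t, k t)) := by
  obtain ⟨r, hr⟩ := hsupp.isCompact.isBounded.subset_closedBall 0
  obtain ⟨C, hC⟩ := hsupp.exists_bound_of_continuous hk
  have hdist : ∀ t : ℝ, ∀ᶠ m : ℕ in atTop, dist ((⌊m * t⌋ : ℝ) / m) t ≤ (m : ℝ)⁻¹ := fun t => by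
    filter_upwards [eventually_gt_atTop 0] with m hm
    exact dist_intFloor_mul_div_le (Nat.cast_pos.2 hm) t
  refine tendsto_integral_filter_of_dominated_convergence
    ((Metric.closedBall (0 : ℝ) (r + 1)).indicator fun _ => C)
    (Eventually.of_forall fun m => (hk.measurable.comp (by fun_prop)).aestronglyMeasurable)
    ?_ ((integrable_indicator_iff measurableSet_closedBall).2
      (integrableOn_const measure_closedBall_lt_top.ne))
    (ae_of_all _ fun t => (hk.tendsto t).comp (tendsto_iff_dist_tendsto_zero.2
      (squeeze_zero' (.of_forall fun _ => dist_nonneg) (hdist t)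
        tendsto_inv_atTop_nhds_zero_nat)))
  filter_upwards [eventually_ge_atTop 1] with m hm
  refine ae_of_all _ fun t => ?_
  by_cases ht : t ∈ Metric.closedBall (0 : ℝ) (r + 1)
  · rw [Set.indicator_of_mem ht]
    exact hC _
  · rw [Set.indicator_of_notMem ht, image_eq_zero_of_notMem_tsupport (f := k), norm_zero]
    intro hmem
    have h₁ := Metric.mem_closedBall.1 (hr hmem)
    have h₂ := dist_intFloor_mul_div_le (m := m) (by positivity) t
    have h₃ : (m : ℝ)⁻¹ ≤ 1 := inv_le_one_of_one_le₀ (by exact_mod_cast hm)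
    exact ht (Metric.mem_closedBall.2 (by linarith [dist_triangle_left t 0 ((⌊m * t⌋ : ℝ) / m)]))

theorem IsPosDefKernel.integral_nonneg {k : ℝ → ℝ} (hpd : IsPosDefKernel fun x y => k (x - y))
    (hk : Continuous k) (hsupp : HasCompactSupport k) : 0 ≤ ∫ t, k t := by
  obtain ⟨r, hr⟩ := hsupp.isCompact.isBounded.subset_closedBall 0
  refine ge_of_tendsto (tendsto_integral_comp_intFloor_mul_div hk hsupp) ?_
  filter_upwards [eventually_gt_atTop 0] with m hm
  have hm' : (0 : ℝ) < m := Nat.cast_pos.2 hm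
  set f : ℤ → ℝ := fun d => k (d / m)
  have hf : IsPosDefKernel fun a b : ℤ => f (a - b) := by
    simpa only [f, Int.cast_sub, sub_div] using hpd.comp fun d : ℤ => (d : ℝ) / m
  have hf0 : ∀ d ∉ Icc (-⌈r * m⌉₊ : ℤ) ⌈r * m⌉₊, f d = 0 := fun d hd =>
    image_eq_zero_of_notMem_tsupport (f := k) fun hmem => hd <| by
      have h := Metric.mem_closedBall.1 (hr hmem)
      rw [dist_zero_right, Real.norm_eq_abs, abs_div, abs_of_pos hm', div_le_iff₀ hm'] at h
      exact mem_Icc.2 (abs_le.1 (by exact_mod_cast h.trans (Nat.le_ceil _)))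
  calc 0 ≤ (m : ℝ)⁻¹ * ∑ d ∈ Icc (-⌈r * m⌉₊ : ℤ) ⌈r * m⌉₊, f d :=
        mul_nonneg (inv_nonneg.2 hm'.le) (hf.sum_Icc_nonneg hf0)
    _ = ∫ t : ℝ, f ⌊m * t⌋ := by
        rw [Measure.integral_comp_mul_left (fun t => f ⌊t⌋), integral_comp_intFloor hf0,
          smul_eq_mul, abs_of_pos (inv_pos.2 hm')]

theorem continuous_integral_of_forall_notMem_eq_zero {X : Type*} [TopologicalSpace X]
    [FirstCountableTopology X] [LocallyCompactSpace X] {f : X → ℝ → ℝ}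
    (hf : Continuous (Function.uncurry f)) {s : Set ℝ} (hs : IsCompact s)
    (h0 : ∀ x, ∀ t ∉ s, f x t = 0) : Continuous fun x => ∫ t, f x t :=
  (continuous_parametric_integral_of_continuous hf hs).congr fun x =>
    setIntegral_eq_integral_of_forall_compl_eq_zero (h0 x)

theorem integral_sum_sum_mul_mul {ι : Type*} [Fintype ι] {F : ι → ι → ℝ → ℝ}
    (hF : ∀ i j, Integrable (F i j)) (c : ι → ℝ) :
    ∫ x, ∑ i, ∑ j, c i * c j * F i j x = ∑ i, ∑ j, c i * c j * ∫ x, F i j x := by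
  rw [integral_finsetSum _ fun i _ => integrable_finsetSum _ fun j _ => (hF i j).const_mul _]
  refine sum_congr rfl fun i _ => ?_
  rw [integral_finsetSum _ fun j _ => (hF i j).const_mul _]
  exact sum_congr rfl fun j _ => integral_const_mul _ _

theorem fourier_coefficients_posdef_general
    (φ : ℝ → ℝ → ℝ) (hcont : Continuous (Function.uncurry φ))
    (hpd : IsPosDefKernel (fun p q : ℝ × ℝ => φ (p.1 - q.1) (p.2 - q.2)))
    (hsupp : ∀ x u : ℝ, Real.pi ≤ |x| → φ x u = 0)
    (n : ℕ) :
    Continuous (fun u : ℝ => (1 / Real.pi) * ∫ x : ℝ, Real.cos (n * x) * φ x u) ∧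
      IsPosDefKernel (fun u₁ u₂ : ℝ =>
        (1 / Real.pi) * ∫ x : ℝ, Real.cos (n * x) * φ x (u₁ - u₂)) := by
  set g : ℝ → ℝ → ℝ := fun x u => Real.cos (n * x) * φ x u
  have hg : Continuous (Function.uncurry g) :=
    (Real.continuous_cos.comp (continuous_const.mul continuous_fst)).mul hcont
  have hg0 : ∀ u, ∀ x ∉ Set.Icc (-Real.pi) Real.pi, g x u = 0 := fun u x hx => by
    simp only [g, hsupp x u (not_le.1 (mt abs_le.1 hx)).le, mul_zero]
  have hg_int : ∀ u, Integrable fun x => g x u := fun u =>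
    (hg.comp (Continuous.prodMk_left u)).integrable_of_hasCompactSupport
      (HasCompactSupport.intro isCompact_Icc (hg0 u))
  refine ⟨continuous_const.mul ?_, fun N u c => ?_⟩
  · exact continuous_integral_of_forall_notMem_eq_zero (f := fun u x => g x u)
      (hg.comp continuous_swap) isCompact_Icc hg0
  show 0 ≤ ∑ i, ∑ j, c i * c j * (1 / Real.pi * ∫ x, g x (u i - u j))
  set k : ℝ → ℝ := fun x => ∑ i, ∑ j, c i * c j * g x (u i - u j)
  have hk_pd : IsPosDefKernel fun x y => k (x - y) := by
    convert (hpd.cos_sub_mul fun p => n * p.1).sum_slice u c using 1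
    simp only [k, g, mul_sub]
  have hk : Continuous k := by fun_prop
  have hk_supp : HasCompactSupport k :=
    HasCompactSupport.intro (isCompact_Icc (a := -Real.pi) (b := Real.pi)) fun x hx => by
      simp [k, hg0 _ x hx]
  calc (0 : ℝ) ≤ 1 / Real.pi * ∫ x, k x :=
        mul_nonneg (by positivity) (hk_pd.integral_nonneg hk hk_supp)
    _ = _ := by
      rw [integral_sum_sum_mul_mul (fun i j => hg_int _), mul_sum]
      exact sum_congr rfl fun i _ => by rw [mul_sum]; exact sum_congr rfl fun j _ => by ring

/-- The cosine Fourier coefficients `b_n(u) = (1/π) ∫ cos(n x) φ(x,u) dx` of a continuous,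
symmetric-in-the-first-argument, positive definite function on `ℝ × ℝ` that vanishes for
`|x| ≥ π` are continuous positive definite functions on `ℝ`. -/
theorem fourier_coefficients_posdef
    (φ : ℝ → ℝ → ℝ) (hcont : Continuous (Function.uncurry φ))
    (hsymm : ∀ x u : ℝ, φ (-x) u = φ x u)
    (hpd : IsPosDefKernel (fun p q : ℝ × ℝ => φ (p.1 - q.1) (p.2 - q.2)))
    (hsupp : ∀ x u : ℝ, Real.pi ≤ |x| → φ x u = 0)
    (n : ℕ) :
    Continuous (fun u : ℝ => (1 / Real.pi) * ∫ x : ℝ, Real.cos (n * x) * φ x u) ∧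
      IsPosDefKernel (fun u₁ u₂ : ℝ =>
        (1 / Real.pi) * ∫ x : ℝ, Real.cos (n * x) * φ x (u₁ - u₂)) :=
  fourier_coefficients_posdef_general φ hcont hpd hsupp n
end
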